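/- In the bivariate von Mises model, the random variables X₁ and X₂ are independent if and only if λ = 0. (For λ = 0 the density factorizes into a product of univariate von Mises densities; for λ ≠ 0 it does not factorize.) -/
import Mathlib

open MeasureTheory Real

private lemma bvm_sinInt (μ : ℝ) : ∫ x in (0:ℝ)..(2*π), Real.sin (x - μ) = 0 := by
  rw [intervalIntegral.integral_comp_sub_right (fun x => Real.sin x) μ, integral_sin]
  simp [Real.cos_sub, Real.cos_two_pi, Real.sin_two_pi]

private lemma bvm_sinSqInt (μ : ℝ) : ∫ x in (0:ℝ)..(2*π), Real.sin (x - μ) ^ 2 = π := by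
  rw [intervalIntegral.integral_comp_sub_right (fun x => Real.sin x ^ 2) μ, integral_sin_sq]
  simp [Real.sin_sub, Real.cos_sub, Real.sin_two_pi, Real.cos_two_pi]

private lemma bvm_keyInt (μ c : ℝ) :
    ∫ x in Set.Ico (0:ℝ) (2*π), (Real.sin (x - μ) - c) ^ 2 = π + 2*π*c^2 := by
  rw [setIntegral_congr_set Ico_ae_eq_Ioc, ← intervalIntegral.integral_of_le (by positivity)]
  have h1 : (fun x => (Real.sin (x - μ) - c) ^ 2) = fun x => Real.sin (x-μ)^2 - (2*c) * Real.sin (x-μ) + c^2 := by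
    funext x; ring
  have i1 : IntervalIntegrable (fun x => Real.sin (x-μ)^2) volume 0 (2*π) := by
    apply Continuous.intervalIntegrable; continuity
  have i2 : IntervalIntegrable (fun x => (2*c) * Real.sin (x-μ)) volume 0 (2*π) := by
    apply Continuous.intervalIntegrable; continuity
  have i3 : IntervalIntegrable (fun _ : ℝ => c^2) volume 0 (2*π) := intervalIntegrable_const
  calc ∫ x in (0:ℝ)..(2*π), (Real.sin (x - μ) - c) ^ 2
      = ∫ x in (0:ℝ)..(2*π), (Real.sin (x-μ)^2 - (2*c) * Real.sin (x-μ) + c^2) := by rw [h1]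
    _ = (∫ x in (0:ℝ)..(2*π), Real.sin (x-μ)^2) - (∫ x in (0:ℝ)..(2*π), (2*c) * Real.sin (x-μ)) + ∫ x in (0:ℝ)..(2*π), (c^2:ℝ) := by
        rw [intervalIntegral.integral_add (i1.sub i2) i3, intervalIntegral.integral_sub i1 i2]
    _ = π + 2*π*c^2 := by
        rw [bvm_sinSqInt, intervalIntegral.integral_const_mul, bvm_sinInt, intervalIntegral.integral_const]
        simp [smul_eq_mul]

private lemma bvm_ae_fst {m : Measure ℝ} [SFinite m] {Q : ℝ → Prop} (hQ : ∀ᵐ x ∂m, Q x) :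
    ∀ᵐ p ∂(m.prod m), Q p.1 := by
  rw [ae_iff] at hQ ⊢
  obtain ⟨N, hsub, hNm, hN0⟩ := exists_measurable_superset_of_null hQ
  refine measure_mono_null (t := N ×ˢ Set.univ) ?_ ?_
  · intro p hp; exact ⟨hsub hp, trivial⟩
  · rw [Measure.prod_prod, hN0, zero_mul]

private lemma bvm_ae_snd {m : Measure ℝ} [SFinite m] {Q : ℝ → Prop} (hQ : ∀ᵐ y ∂m, Q y) :
    ∀ᵐ p ∂(m.prod m), Q p.2 := by
  rw [ae_iff] at hQ ⊢
  obtain ⟨N, hsub, hNm, hN0⟩ := exists_measurable_superset_of_null hQ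
  refine measure_mono_null (t := Set.univ ×ˢ N) ?_ ?_
  · intro p hp; exact ⟨trivial, hsub hp⟩
  · rw [Measure.prod_prod, hN0, mul_zero]

theorem bivariate_von_mises_factorizes_iff_lambda_zero
    (κ₁ κ₂ μ₁ μ₂ lam C : ℝ)
    (hκ₁ : 0 ≤ κ₁) (hκ₂ : 0 ≤ κ₂)
    (hμ₁ : μ₁ ∈ Set.Ico 0 (2 * π)) (hμ₂ : μ₂ ∈ Set.Ico 0 (2 * π))
    (hC : 0 < C)
    (f : ℝ → ℝ → ℝ)
    (hf : ∀ x₁ x₂, f x₁ x₂ =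
      C * Real.exp (κ₁ * Real.cos (x₁ - μ₁) + κ₂ * Real.cos (x₂ - μ₂)
        + lam * Real.sin (x₁ - μ₁) * Real.sin (x₂ - μ₂))) :
    (∃ g h : ℝ → ℝ,
      ∀ᵐ x ∂(volume.restrict (Set.Ico 0 (2 * π) ×ˢ Set.Ico 0 (2 * π)) :
          Measure (ℝ × ℝ)),
        f x.1 x.2 = g x.1 * h x.2) ↔ lam = 0 := by
  have hπ : (0:ℝ) < π := Real.pi_pos
  set S : Set ℝ := Set.Ico 0 (2 * π) with hS
  set m : Measure ℝ := volume.restrict S with hm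
  constructor
  · rintro ⟨g, h, hae⟩
    have hP : (volume.restrict (S ×ˢ S) : Measure (ℝ × ℝ)) = m.prod m := by
      rw [hm, Measure.prod_restrict, ← Measure.volume_eq_prod]
    rw [hP] at hae
    -- hae : ∀ᵐ p ∂m.prod m, f p.1 p.2 = g p.1 * h p.2
    have hs1 : ∀ᵐ x ∂m, ∀ᵐ y ∂m, f x y = g x * h y := Measure.ae_ae_of_ae_prod hae
    have hswap : ∀ᵐ p ∂(m.prod m), f p.2 p.1 = g p.2 * h p.1 := by
      have hmp := Measure.measurePreserving_swap (μ := m) (ν := m)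
      exact hmp.quasiMeasurePreserving.ae hae
    have hs2 : ∀ᵐ y ∂m, ∀ᵐ x ∂m, f x y = g x * h y := Measure.ae_ae_of_ae_prod hswap
    have hne : m.prod m ≠ 0 := by
      intro h0
      have : (m.prod m) Set.univ = 0 := by rw [h0]; rfl
      rw [← Set.univ_prod_univ, Measure.prod_prod] at this
      have hmu : m Set.univ = ENNReal.ofReal (2 * π) := by
        rw [hm, Measure.restrict_apply_univ, hS, Real.volume_Ico, sub_zero]
      rw [hmu] at this
      simp only [mul_eq_zero, ENNReal.ofReal_eq_zero, or_self] at this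
      linarith
    haveI : (ae (m.prod m)).NeBot := ae_neBot.mpr hne
    have hgood : ∀ᵐ p ∂(m.prod m),
        (∀ᵐ y ∂m, f p.1 y = g p.1 * h y) ∧ (∀ᵐ x ∂m, f x p.2 = g x * h p.2)
          ∧ f p.1 p.2 = g p.1 * h p.2 :=
      (bvm_ae_fst hs1).and ((bvm_ae_snd hs2).and hae)
    obtain ⟨p₀, h1, h2, h3⟩ := hgood.exists
    set x₀ := p₀.1 with hx₀
    set y₀ := p₀.2 with hy₀
    have hkey : ∀ᵐ p ∂(m.prod m), f p.1 p.2 * f x₀ y₀ = f p.1 y₀ * f x₀ p.2 := by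
      filter_upwards [hae, bvm_ae_snd h1, bvm_ae_fst h2] with p e1 e2 e3
      rw [e1, e2, e3, h3]; ring
    set s₀ := Real.sin (x₀ - μ₁) with hs₀
    set t₀ := Real.sin (y₀ - μ₂) with ht₀
    have hzero : ∀ᵐ p ∂(m.prod m),
        lam * (Real.sin (p.1 - μ₁) - s₀) * (Real.sin (p.2 - μ₂) - t₀) = 0 := by
      filter_upwards [hkey] with p hp
      rw [hf, hf, hf, hf] at hp
      have hCC : C * C ≠ 0 := mul_ne_zero hC.ne' hC.ne'
      set A := κ₁ * Real.cos (p.1 - μ₁) + κ₂ * Real.cos (p.2 - μ₂)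
            + lam * Real.sin (p.1 - μ₁) * Real.sin (p.2 - μ₂) with hAdef
      set D := κ₁ * Real.cos (x₀ - μ₁) + κ₂ * Real.cos (y₀ - μ₂)
            + lam * Real.sin (x₀ - μ₁) * Real.sin (y₀ - μ₂) with hDdef
      set B := κ₁ * Real.cos (p.1 - μ₁) + κ₂ * Real.cos (y₀ - μ₂)
            + lam * Real.sin (p.1 - μ₁) * Real.sin (y₀ - μ₂) with hBdef
      set E := κ₁ * Real.cos (x₀ - μ₁) + κ₂ * Real.cos (p.2 - μ₂)
            + lam * Real.sin (x₀ - μ₁) * Real.sin (p.2 - μ₂) with hEdef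
      have hx : Real.exp A * Real.exp D = Real.exp B * Real.exp E :=
        mul_left_cancel₀ hCC (by linear_combination hp)
      rw [← Real.exp_add, ← Real.exp_add] at hx
      have h2' : A + D = B + E := Real.exp_eq_exp.mp hx
      rw [hs₀, ht₀]
      linear_combination h2'
    have hint : ∫ p, ((lam * (Real.sin (p.1 - μ₁) - s₀))^2 * (Real.sin (p.2 - μ₂) - t₀)^2)
        ∂(m.prod m) = 0 := by
      apply integral_eq_zero_of_ae
      filter_upwards [hzero] with p hp
      have : (lam * (Real.sin (p.1 - μ₁) - s₀))^2 * (Real.sin (p.2 - μ₂) - t₀)^2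
          = (lam * (Real.sin (p.1 - μ₁) - s₀) * (Real.sin (p.2 - μ₂) - t₀))^2 := by ring
      rw [Pi.zero_apply, this, hp]; norm_num
    rw [integral_prod_mul (f := fun x => (lam * (Real.sin (x - μ₁) - s₀))^2)
      (g := fun y => (Real.sin (y - μ₂) - t₀)^2)] at hint
    have e1 : ∫ x, (lam * (Real.sin (x - μ₁) - s₀))^2 ∂m = lam^2 * (π + 2*π*s₀^2) := by
      have : ∀ x, (lam * (Real.sin (x - μ₁) - s₀))^2 = lam^2 * (Real.sin (x - μ₁) - s₀)^2 := by
        intro x; ring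
      simp_rw [this]
      rw [integral_const_mul, hm, hS, bvm_keyInt]
    have e2 : ∫ y, (Real.sin (y - μ₂) - t₀)^2 ∂m = π + 2*π*t₀^2 := by
      rw [hm, hS, bvm_keyInt]
    rw [e1, e2] at hint
    have hp1 : (0:ℝ) < π + 2*π*s₀^2 := by positivity
    have hp2 : (0:ℝ) < π + 2*π*t₀^2 := by positivity
    have : lam^2 = 0 := by
      rcases mul_eq_zero.mp hint with h' | h'
      · rcases mul_eq_zero.mp h' with h'' | h''
        · exact h''
        · exact absurd h'' hp1.ne'
      · exact absurd h' hp2.ne'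
    exact pow_eq_zero_iff (by norm_num) |>.mp this
  · rintro rfl
    refine ⟨fun x => C * Real.exp (κ₁ * Real.cos (x - μ₁)),
      fun y => Real.exp (κ₂ * Real.cos (y - μ₂)), ae_of_all _ ?_⟩
    intro p
    rw [hf]
    rw [show κ₁ * Real.cos (p.1 - μ₁) + κ₂ * Real.cos (p.2 - μ₂)
        + 0 * Real.sin (p.1 - μ₁) * Real.sin (p.2 - μ₂)
        = κ₁ * Real.cos (p.1 - μ₁) + κ₂ * Real.cos (p.2 - μ₂) by ring]
    rw [Real.exp_add]; ring
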